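/- arXiv:1807.05328 — 5 statements merged into one kernel-verified Lean document; each statement's English description precedes it below -/
import Mathlib

section
/- Suppose each f_i : ℝ^d → ℝ (i = 1,…,n) is convex and Λ-smooth, and let w_* be a global minimizer of F(w) = (1/n) ∑_{i=1}^n f_i(w). Then for every w ∈ ℝ^d, (1/n) ∑_{i=1}^n ‖∇f_i(w) − ∇f_i(w_*)‖² ≤ 2Λ (F(w) − F(w_*)). -/
/-!
Each `fᵢ` is co-coercive: for a convex `Λ`-smooth `g`,
`‖∇g y - ∇g x‖² ≤ 2Λ (g y - g x - ⟪∇g x, y - x⟫)`. This follows by evaluating `g` at the gradient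
step `y - (∇g y - ∇g x) / Λ`, bounded above by the descent lemma at `y` and below by the tangent
plane at `x`. Averaging over `i` with `x = w*`, `y = w`, the linear terms add up to
`⟪∇F w*, w - w*⟫ = 0`, leaving `2Λ (F w - F w*)`.
-/

open scoped RealInnerProductSpace Gradient
open Finset Set

theorem ConvexOn.comp_add_smul {E : Type*} [AddCommGroup E] [Module ℝ E] {g : E → ℝ}
    (hc : ConvexOn ℝ univ g) (x v : E) : ConvexOn ℝ univ (fun t : ℝ => g (x + t • v)) := by
  have h := hc.comp_affineMap (AffineMap.lineMap x (x + v))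
  rw [show g ∘ AffineMap.lineMap x (x + v) = fun t : ℝ => g (x + t • v) by
    ext t; simp [AffineMap.lineMap_apply_module', add_comm]] at h
  simpa using h

section Gradient

variable {E : Type*} [NormedAddCommGroup E] [InnerProductSpace ℝ E] [CompleteSpace E]
  {g : E → ℝ} {x : E}

theorem hasDerivAt_comp_add_smul {v : E} {t : ℝ} (hg : DifferentiableAt ℝ g (x + t • v)) :
    HasDerivAt (fun s : ℝ => g (x + s • v)) ⟪∇ g (x + t • v), v⟫ t := by
  have hline : HasDerivAt (fun s : ℝ => x + s • v) v t := by
    simpa using ((hasDerivAt_id t).smul_const v).const_add x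
  simpa only [Function.comp_def, InnerProductSpace.toDual_apply_apply] using
    (hasGradientAt_iff_hasFDerivAt.mp hg.hasGradientAt).comp_hasDerivAt t hline

theorem ConvexOn.add_inner_gradient_le (hc : ConvexOn ℝ univ g) (hg : DifferentiableAt ℝ g x)
    (y : E) : g x + ⟪∇ g x, y - x⟫ ≤ g y := by
  have := (hc.comp_add_smul x (y - x)).le_slope_of_hasDerivAt (mem_univ 0) (mem_univ 1) one_pos
    (hasDerivAt_comp_add_smul (by simpa using hg))
  simp only [slope_def_field, zero_smul, add_zero, one_smul, add_sub_cancel, sub_zero,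
    div_one] at this
  linarith

theorem apply_add_le_of_gradient_lipschitz {Λ : ℝ} (hg : Differentiable ℝ g)
    (hL : ∀ a b : E, ‖∇ g b - ∇ g a‖ ≤ Λ * ‖b - a‖) (x v : E) :
    g (x + v) ≤ g x + ⟪∇ g x, v⟫ + Λ / 2 * ‖v‖ ^ 2 := by
  have hline (t : ℝ) := hasDerivAt_comp_add_smul (x := x) (v := v) (hg (x + t • v)) (t := t)
  have hbound (t : ℝ) :
      HasDerivAt (fun s : ℝ => g x + s * ⟪∇ g x, v⟫ + Λ / 2 * ‖v‖ ^ 2 * s ^ 2)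
        (⟪∇ g x, v⟫ + Λ * ‖v‖ ^ 2 * t) t := by
    have := (((hasDerivAt_id' t).mul_const ⟪∇ g x, v⟫).const_add (g x)).add
      ((hasDerivAt_pow 2 t).const_mul (Λ / 2 * ‖v‖ ^ 2))
    exact this.congr_deriv (by push_cast; ring)
  have hslope (t : ℝ) (ht : t ∈ Ico (0 : ℝ) 1) :
      ⟪∇ g (x + t • v), v⟫ ≤ ⟪∇ g x, v⟫ + Λ * ‖v‖ ^ 2 * t := by
    have hdist : ‖x + t • v - x‖ = t * ‖v‖ := by
      rw [add_sub_cancel_left, norm_smul, Real.norm_of_nonneg ht.1]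
    calc ⟪∇ g (x + t • v), v⟫ = ⟪∇ g x, v⟫ + ⟪∇ g (x + t • v) - ∇ g x, v⟫ := by
          rw [inner_sub_left]; ring
      _ ≤ ⟪∇ g x, v⟫ + Λ * (t * ‖v‖) * ‖v‖ := by
          gcongr
          exact (real_inner_le_norm _ _).trans
            (mul_le_mul_of_nonneg_right (hdist ▸ hL _ _) (norm_nonneg v))
      _ = ⟪∇ g x, v⟫ + Λ * ‖v‖ ^ 2 * t := by ring
  simpa using image_le_of_deriv_right_le_deriv_boundary
    (fun t _ => (hline t).continuousAt.continuousWithinAt)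
    (fun t _ => (hline t).hasDerivWithinAt) (by simp)
    (fun t _ => (hbound t).continuousAt.continuousWithinAt)
    (fun t _ => (hbound t).hasDerivWithinAt) hslope (right_mem_Icc.2 zero_le_one)

theorem ConvexOn.sq_norm_gradient_sub_le {Λ : ℝ} (hc : ConvexOn ℝ univ g)
    (hg : Differentiable ℝ g) (hL : ∀ a b : E, ‖∇ g b - ∇ g a‖ ≤ Λ * ‖b - a‖) (x y : E) :
    ‖∇ g y - ∇ g x‖ ^ 2 ≤ 2 * Λ * (g y - g x - ⟪∇ g x, y - x⟫) := by
  rcases le_or_gt Λ 0 with hΛ | hΛ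
  · have hconst : ∇ g y = ∇ g x := by
      rw [← sub_eq_zero, ← norm_le_zero_iff]
      exact (hL x y).trans (mul_nonpos_of_nonpos_of_nonneg hΛ (norm_nonneg _))
    have hback := hc.add_inner_gradient_le (hg y) x
    rw [hconst, ← neg_sub y x, inner_neg_right] at hback
    rw [hconst, sub_self, norm_zero, zero_pow two_ne_zero]
    exact mul_nonneg_of_nonpos_of_nonpos (by linarith) (by linarith)
  · set Δ := ∇ g y - ∇ g x
    have hstep := apply_add_le_of_gradient_lipschitz hg hL y (-Λ⁻¹ • Δ)
    have htangent := hc.add_inner_gradient_le (hg x) (y + -Λ⁻¹ • Δ)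
    have hΔ : ⟪∇ g y, Δ⟫ - ⟪∇ g x, Δ⟫ = ‖Δ‖ ^ 2 := by
      rw [← inner_sub_left, real_inner_self_eq_norm_sq]
    rw [add_sub_right_comm, inner_add_right] at htangent
    simp only [inner_smul_right, norm_smul, mul_pow, norm_neg, norm_inv, Real.norm_eq_abs,
      abs_of_pos hΛ] at hstep htangent
    have key : ‖Δ‖ ^ 2 / (2 * Λ) ≤ g y - g x - ⟪∇ g x, y - x⟫ := by
      have : ‖Δ‖ ^ 2 / (2 * Λ)
          = Λ⁻¹ * (⟪∇ g y, Δ⟫ - ⟪∇ g x, Δ⟫) - Λ / 2 * (Λ⁻¹ ^ 2 * ‖Δ‖ ^ 2) := by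
        rw [hΔ]; field_simp; ring
      rw [this]; linarith
    rwa [div_le_iff₀ (by positivity), mul_comm] at key

theorem IsLocalMin.gradient_eq_zero (h : IsLocalMin g x) : ∇ g x = 0 := by
  rw [gradient, h.fderiv_eq_zero, map_zero]

theorem HasGradientAt.const_mul_sum {ι : Type*} (s : Finset ι) (c : ℝ) {f : ι → E → ℝ}
    {f' : ι → E} (h : ∀ i ∈ s, HasGradientAt (f i) (f' i) x) :
    HasGradientAt (fun y => c * ∑ i ∈ s, f i y) (c • ∑ i ∈ s, f' i) x := by
  rw [hasGradientAt_iff_hasFDerivAt, map_smul, map_sum]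
  exact (HasFDerivAt.fun_sum fun i hi => hasGradientAt_iff_hasFDerivAt.mp (h i hi)).const_mul c

end Gradient

theorem stmt2_general (d n : ℕ) (Λ : ℝ)
    (f : Fin n → EuclideanSpace ℝ (Fin d) → ℝ)
    (hdiff : ∀ i, Differentiable ℝ (f i))
    (hconv : ∀ i, ConvexOn ℝ Set.univ (f i))
    (hsmooth : ∀ i, ∀ w w' : EuclideanSpace ℝ (Fin d),
      ‖gradient (f i) w' - gradient (f i) w‖ ≤ Λ * ‖w' - w‖)
    (F : EuclideanSpace ℝ (Fin d) → ℝ) (hF : ∀ w, F w = (n : ℝ)⁻¹ * ∑ i, f i w)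
    (wstar : EuclideanSpace ℝ (Fin d)) (hmin : ∀ w, F wstar ≤ F w)
    (w : EuclideanSpace ℝ (Fin d)) :
    (n : ℝ)⁻¹ * ∑ i, ‖gradient (f i) w - gradient (f i) wstar‖ ^ 2
      ≤ 2 * Λ * (F w - F wstar) := by
  have hgradF : HasGradientAt F ((n : ℝ)⁻¹ • ∑ i, ∇ (f i) wstar) wstar := by
    rw [funext hF]
    exact HasGradientAt.const_mul_sum _ _ fun i _ => (hdiff i wstar).hasGradientAt
  have hcrit : (n : ℝ)⁻¹ • ∑ i, ∇ (f i) wstar = 0 := by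
    rw [← hgradF.gradient]
    exact IsLocalMin.gradient_eq_zero (.of_forall hmin)
  calc (n : ℝ)⁻¹ * ∑ i, ‖∇ (f i) w - ∇ (f i) wstar‖ ^ 2
      ≤ (n : ℝ)⁻¹ * ∑ i, 2 * Λ * (f i w - f i wstar - ⟪∇ (f i) wstar, w - wstar⟫) := by
        gcongr with i
        exact (hconv i).sq_norm_gradient_sub_le (hdiff i) (hsmooth i) wstar w
    _ = 2 * Λ * (F w - F wstar - ⟪(n : ℝ)⁻¹ • ∑ i, ∇ (f i) wstar, w - wstar⟫) := by
        rw [hF, hF, real_inner_smul_left, sum_inner, ← mul_sum, sum_sub_distrib, sum_sub_distrib]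
        ring
    _ = 2 * Λ * (F w - F wstar) := by
        rw [hcrit, inner_zero_left, sub_zero]

theorem stmt2 (d n : ℕ) (hn : 1 ≤ n) (Λ : ℝ)
    (f : Fin n → EuclideanSpace ℝ (Fin d) → ℝ)
    (hdiff : ∀ i, Differentiable ℝ (f i))
    (hconv : ∀ i, ConvexOn ℝ Set.univ (f i))
    (hsmooth : ∀ i, ∀ w w' : EuclideanSpace ℝ (Fin d),
      ‖gradient (f i) w' - gradient (f i) w‖ ≤ Λ * ‖w' - w‖)
    (F : EuclideanSpace ℝ (Fin d) → ℝ) (hF : ∀ w, F w = (n : ℝ)⁻¹ * ∑ i, f i w)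
    (wstar : EuclideanSpace ℝ (Fin d)) (hmin : ∀ w, F wstar ≤ F w)
    (w : EuclideanSpace ℝ (Fin d)) :
    (n : ℝ)⁻¹ * ∑ i, ‖gradient (f i) w - gradient (f i) wstar‖ ^ 2
      ≤ 2 * Λ * (F w - F wstar) :=
  stmt2_general d n Λ f hdiff hconv hsmooth F hF wstar hmin w
end

section
/- Let 𝓗 be a real symmetric positive definite d×d matrix, and let s, y ∈ ℝ^d with s ≠ 0 and yᵀ s > 0. Define the BFGS update 𝓗' = 𝓗 − (𝓗 s sᵀ 𝓗)/(sᵀ 𝓗 s) + (y yᵀ)/(yᵀ s). Then det(𝓗') = det(𝓗) · (yᵀ s)/(sᵀ 𝓗 s). -/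
/-
The BFGS correction is a rank-two perturbation `H + u₁ v₁ᵀ + u₂ v₂ᵀ` with
`u₁ = -(sᵀHs)⁻¹ Hs`, `v₁ = Hᵀs`, `u₂ = (yᵀs)⁻¹ y`, `v₂ = y`, so the generalized matrix
determinant lemma gives `det H' = det H · det (I₂ + Vᵀ H⁻¹ U)`. In this `2 × 2` matrix the
entry `1 + v₁ᵀ H⁻¹ u₁` vanishes, because the first correction removes exactly the curvature
of `H` along `s`; the determinant is then minus the product of the off-diagonal entries
`1` and `-(yᵀs)/(sᵀHs)`.
-/

open scoped Matrix RealInnerProductSpace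
open Finset

noncomputable def bfgsUpdate {d : ℕ} (H : Matrix (Fin d) (Fin d) ℝ) (s y : Fin d → ℝ) :
    Matrix (Fin d) (Fin d) ℝ :=
  H - (s ⬝ᵥ H.mulVec s)⁻¹ • Matrix.vecMulVec (H.mulVec s) (Matrix.vecMul s H)
    + (y ⬝ᵥ s)⁻¹ • Matrix.vecMulVec y y

namespace Matrix

variable {m α : Type*} [CommRing α]

theorem vecMulVec_add_vecMulVec (u₁ v₁ u₂ v₂ : m → α) :
    vecMulVec u₁ v₁ + vecMulVec u₂ v₂ = (of ![u₁, u₂])ᵀ * of ![v₁, v₂] := by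
  ext i j
  simp [vecMulVec_apply, mul_apply, Fin.sum_univ_two]

variable [Fintype m] [DecidableEq m]

theorem det_add_vecMulVec_add_vecMulVec {A : Matrix m m α} (hA : IsUnit A.det)
    (u₁ v₁ u₂ v₂ : m → α) :
    (A + vecMulVec u₁ v₁ + vecMulVec u₂ v₂).det =
      A.det * ((1 + v₁ ⬝ᵥ A⁻¹ *ᵥ u₁) * (1 + v₂ ⬝ᵥ A⁻¹ *ᵥ u₂)
        - (v₁ ⬝ᵥ A⁻¹ *ᵥ u₂) * (v₂ ⬝ᵥ A⁻¹ *ᵥ u₁)) := by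
  rw [add_assoc, vecMulVec_add_vecMulVec, det_add_mul _ _ hA, det_fin_two, Matrix.mul_assoc]
  simp only [add_apply, one_apply_eq, one_apply_ne zero_ne_one, one_apply_ne one_ne_zero, zero_add]
  rfl

end Matrix

open Matrix

theorem det_bfgsUpdate {d : ℕ} {H : Matrix (Fin d) (Fin d) ℝ} (hH : IsUnit H.det)
    {s : Fin d → ℝ} (hs : s ⬝ᵥ H *ᵥ s ≠ 0) (y : Fin d → ℝ) :
    (bfgsUpdate H s y).det = H.det * (y ⬝ᵥ s) / (s ⬝ᵥ H *ᵥ s) := by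
  have hupd : bfgsUpdate H s y = H + vecMulVec ((-(s ⬝ᵥ H *ᵥ s)⁻¹) • H *ᵥ s) (s ᵥ* H)
      + vecMulVec ((y ⬝ᵥ s)⁻¹ • y) y := by
    simp only [bfgsUpdate, neg_smul, neg_vecMulVec, smul_vecMulVec, sub_eq_add_neg]
  have hHs : H⁻¹ *ᵥ H *ᵥ s = s := by
    rw [mulVec_mulVec, nonsing_inv_mul _ hH, one_mulVec]
  have hsH (v : Fin d → ℝ) : s ᵥ* H ⬝ᵥ H⁻¹ *ᵥ v = s ⬝ᵥ v := by
    rw [dotProduct_mulVec, vecMul_vecMul, mul_nonsing_inv _ hH, vecMul_one]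
  rw [hupd, det_add_vecMulVec_add_vecMulVec hH]
  simp only [mulVec_smul, dotProduct_smul, hsH, smul_eq_mul]
  rw [hHs, dotProduct_comm s y]
  field_simp
  ring

theorem stmt9_general (d : ℕ) (H : Matrix (Fin d) (Fin d) ℝ) (hpd : H.PosDef)
    (s y : Fin d → ℝ) (hs : s ≠ 0) :
    (bfgsUpdate H s y).det = H.det * (y ⬝ᵥ s) / (s ⬝ᵥ H.mulVec s) :=
  det_bfgsUpdate hpd.det_pos.ne'.isUnit (by simpa using (hpd.dotProduct_mulVec_pos hs).ne') y

theorem stmt9 (d : ℕ) (H : Matrix (Fin d) (Fin d) ℝ) (hsym : H.IsSymm) (hpd : H.PosDef)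
    (s y : Fin d → ℝ) (hs : s ≠ 0) (hys : 0 < y ⬝ᵥ s) :
    (bfgsUpdate H s y).det = H.det * (y ⬝ᵥ s) / (s ⬝ᵥ H.mulVec s) :=
  stmt9_general d H hpd s y hs
end

section
/- Fix d, m ≥ 1 and constants 0 < σ ≤ Σ and 0 < λ̂ ≤ Λ̂. Let 𝓗^(0) be a real symmetric d×d matrix with Σ^{-1} I ⪯ 𝓗^(0) ⪯ σ^{-1} I, and let (s_j, y_j) ∈ ℝ^d × ℝ^d for j = 1,…,m be pairs with s_j ≠ 0 and y_j = B_j s_j for real symmetric matrices B_j satisfying λ̂ I ⪯ B_j ⪯ Λ̂ I. Define the BFGS recursion 𝓗^(j) = 𝓗^(j−1) − (𝓗^(j−1) s_j s_jᵀ 𝓗^(j−1))/(s_jᵀ 𝓗^(j−1) s_j) + (y_j y_jᵀ)/(y_jᵀ s_j). Then each 𝓗^(j) is well defined (symmetric positive definite), and there exist constants 0 < μ₁ ≤ μ₂ depending only on d, m, σ, Σ, λ̂, Λ̂ (and not on the particular pairs) such that the inverse H = (𝓗^(m))^{-1} satisfies μ₁ I ⪯ H ⪯ μ₂ I. -/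
open scoped Matrix RealInnerProductSpace
open Finset

/-!
In quadratic-form terms the update reads
`xᵀ 𝓗⁺ x = min_c (x - c s)ᵀ 𝓗 (x - c s) + (yᵀx)² / (yᵀs)`.
The first term is at most `xᵀ 𝓗 x` and the second at most `Λ̂ |x|²`, so the upper Loewner bound
grows by `Λ̂` per step. For the lower bound, write `x = u + c s` with the minimising `c`: the bound
`α` for `𝓗` controls `u`, and the curvature term controls the component along `s`, which gives
`α ↦ α λ̂ / (4 (α + 2 Λ̂))`. Loewner bounds on `𝓗⁽ᵐ⁾` invert to bounds on its inverse.
-/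

open scoped MatrixOrder
open Matrix

namespace Matrix

section Quadratic

variable {n : Type*} [Fintype n]

lemma dotProduct_self_nonneg (x : n → ℝ) : 0 ≤ x ⬝ᵥ x := by
  simpa using dotProduct_star_self_nonneg x

lemma sq_dotProduct_le (u v : n → ℝ) : (u ⬝ᵥ v) ^ 2 ≤ (u ⬝ᵥ u) * (v ⬝ᵥ v) := by
  simpa [dotProduct, sq] using Finset.sum_mul_sq_le_sq_mul_sq Finset.univ u v

lemma add_dotProduct_add_le (u v : n → ℝ) :
    (u + v) ⬝ᵥ (u + v) ≤ 2 * (u ⬝ᵥ u) + 2 * (v ⬝ᵥ v) := by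
  have := dotProduct_self_nonneg (u - v)
  simp only [add_dotProduct, dotProduct_add, sub_dotProduct, dotProduct_sub,
    dotProduct_comm v u] at this ⊢
  linarith

lemma IsSymm.dotProduct_mulVec_comm {A : Matrix n n ℝ} (hA : A.IsSymm) (u v : n → ℝ) :
    u ⬝ᵥ A *ᵥ v = v ⬝ᵥ A *ᵥ u := by
  rw [dotProduct_mulVec, ← mulVec_transpose, hA.eq, dotProduct_comm]

lemma IsSymm.vecMul_eq_mulVec {A : Matrix n n ℝ} (hA : A.IsSymm) (x : n → ℝ) :
    x ᵥ* A = A *ᵥ x := by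
  rw [← vecMul_transpose, hA.eq]

lemma IsSymm.dotProduct_mulVec_sub_smul {A : Matrix n n ℝ} (hA : A.IsSymm) (x s : n → ℝ)
    (c : ℝ) : (x - c • s) ⬝ᵥ A *ᵥ (x - c • s)
      = x ⬝ᵥ A *ᵥ x - 2 * c * (x ⬝ᵥ A *ᵥ s) + c ^ 2 * (s ⬝ᵥ A *ᵥ s) := by
  have := hA.dotProduct_mulVec_comm s x
  simp only [mulVec_sub, mulVec_smul, sub_dotProduct, dotProduct_sub, smul_dotProduct,
    dotProduct_smul, smul_eq_mul] at this ⊢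
  rw [this]
  ring

lemma IsSymm.two_mul_dotProduct_mulVec_le {A : Matrix n n ℝ} (hA : A.IsSymm)
    (hA₀ : ∀ x, 0 ≤ x ⬝ᵥ A *ᵥ x) (v w : n → ℝ) :
    2 * (w ⬝ᵥ A *ᵥ v) ≤ v ⬝ᵥ A *ᵥ v + w ⬝ᵥ A *ᵥ w := by
  have := hA.dotProduct_mulVec_sub_smul v w 1
  rw [one_smul, hA.dotProduct_mulVec_comm v w] at this
  linarith [hA₀ (v - w)]

end Quadratic

section LoewnerOrder

variable {n : Type*} [DecidableEq n]

lemma isHermitian_smul_one (α : ℝ) : (α • (1 : Matrix n n ℝ)).IsHermitian :=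
  isHermitian_one.smul (IsSelfAdjoint.all α)

lemma posDef_of_smul_one_le {A : Matrix n n ℝ} {α : ℝ} (hα : 0 < α) (h : α • 1 ≤ A) :
    A.PosDef := by
  simpa using (PosDef.one.smul hα).add_posSemidef (le_iff.1 h)

variable [Fintype n]

lemma smul_one_le_iff {A : Matrix n n ℝ} {α : ℝ} :
    α • 1 ≤ A ↔ A.IsSymm ∧ ∀ x, α * (x ⬝ᵥ x) ≤ x ⬝ᵥ A *ᵥ x := by
  have quad (x : n → ℝ) : star x ⬝ᵥ (A - α • 1) *ᵥ x = x ⬝ᵥ A *ᵥ x - α * (x ⬝ᵥ x) := by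
    simp [sub_mulVec, dotProduct_sub, smul_mulVec]
  rw [le_iff, ← isHermitian_iff_isSymm]
  refine ⟨fun h => ⟨by simpa using h.isHermitian.add (isHermitian_smul_one α),
    fun x => by linarith [quad x ▸ h.dotProduct_mulVec_nonneg x]⟩, fun ⟨hA, hx⟩ => ?_⟩
  exact .of_dotProduct_mulVec_nonneg (hA.sub (isHermitian_smul_one α))
    fun x => by linarith [quad x, hx x]

lemma le_smul_one_iff {A : Matrix n n ℝ} {M : ℝ} :
    A ≤ M • 1 ↔ A.IsSymm ∧ ∀ x, x ⬝ᵥ A *ᵥ x ≤ M * (x ⬝ᵥ x) := by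
  have quad (x : n → ℝ) : star x ⬝ᵥ (M • 1 - A) *ᵥ x = M * (x ⬝ᵥ x) - x ⬝ᵥ A *ᵥ x := by
    simp [sub_mulVec, dotProduct_sub, smul_mulVec]
  rw [le_iff, ← isHermitian_iff_isSymm]
  refine ⟨fun h => ⟨by simpa using (isHermitian_smul_one M).sub h.isHermitian,
    fun x => by linarith [quad x ▸ h.dotProduct_mulVec_nonneg x]⟩, fun ⟨hA, hx⟩ => ?_⟩
  exact .of_dotProduct_mulVec_nonneg ((isHermitian_smul_one M).sub hA)
    fun x => by linarith [quad x, hx x]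

lemma PosDef.mulVec_inv_mulVec {A : Matrix n n ℝ} (hA : A.PosDef) (x : n → ℝ) :
    A *ᵥ (A⁻¹ *ᵥ x) = x := by
  rw [mulVec_mulVec, mul_nonsing_inv A hA.det_pos.ne'.isUnit, one_mulVec]

lemma inv_smul_one_le_inv {A : Matrix n n ℝ} {M : ℝ} (hA : A.PosDef) (hM : 0 < M)
    (h : A ≤ M • 1) : M⁻¹ • 1 ≤ A⁻¹ := by
  obtain ⟨hAs, hAM⟩ := le_smul_one_iff.1 h
  refine smul_one_le_iff.2 ⟨isHermitian_iff_isSymm.1 hA.inv.isHermitian, fun x => ?_⟩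
  set z := A⁻¹ *ᵥ x
  have hx : A *ᵥ z = x := hA.mulVec_inv_mulVec x
  have key := hAs.two_mul_dotProduct_mulVec_le
    (fun v => by simpa using hA.posSemidef.dotProduct_mulVec_nonneg v) z (M⁻¹ • x)
  simp only [hx, mulVec_smul, dotProduct_smul, smul_dotProduct, smul_eq_mul,
    dotProduct_comm z x] at key
  have hMx : M⁻¹ * (M⁻¹ * (x ⬝ᵥ A *ᵥ x)) ≤ M⁻¹ * (x ⬝ᵥ x) := by
    rw [← mul_assoc, ← sq, show M⁻¹ * (x ⬝ᵥ x) = M⁻¹ ^ 2 * (M * (x ⬝ᵥ x)) by field_simp]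
    exact mul_le_mul_of_nonneg_left (hAM x) (sq_nonneg _)
  linarith

lemma inv_le_inv_smul_one {A : Matrix n n ℝ} {α : ℝ} (hα : 0 < α) (h : α • 1 ≤ A) :
    A⁻¹ ≤ α⁻¹ • 1 := by
  have hA := posDef_of_smul_one_le hα h
  obtain ⟨hAs, hαA⟩ := smul_one_le_iff.1 h
  refine le_smul_one_iff.2 ⟨isHermitian_iff_isSymm.1 hA.inv.isHermitian, fun x => ?_⟩
  set z := A⁻¹ *ᵥ x
  have hx : A *ᵥ z = x := hA.mulVec_inv_mulVec x
  have hxz : x ⬝ᵥ z = z ⬝ᵥ A *ᵥ z := by rw [← hx, dotProduct_comm]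
  have hsq := dotProduct_self_nonneg (x - α • z)
  simp only [sub_dotProduct, dotProduct_sub, smul_dotProduct, dotProduct_smul, smul_eq_mul,
    dotProduct_comm z x, hxz] at hsq
  have := hαA z
  rw [hxz, le_inv_mul_iff₀ hα]
  nlinarith

lemma PosSemidef.mulVec_dotProduct_mulVec_le {B : Matrix n n ℝ} {Lam : ℝ} (hB : B.PosSemidef)
    (hLam : 0 < Lam) (h : B ≤ Lam • 1) (s : n → ℝ) :
    B *ᵥ s ⬝ᵥ B *ᵥ s ≤ Lam * (s ⬝ᵥ B *ᵥ s) := by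
  obtain ⟨hBs, hBLam⟩ := le_smul_one_iff.1 h
  have key := hBs.two_mul_dotProduct_mulVec_le
    (fun v => by simpa using hB.dotProduct_mulVec_nonneg v) s (Lam⁻¹ • B *ᵥ s)
  simp only [mulVec_smul, dotProduct_smul, smul_dotProduct, smul_eq_mul] at key
  have hBBs : Lam⁻¹ * (Lam⁻¹ * (B *ᵥ s ⬝ᵥ B *ᵥ (B *ᵥ s))) ≤ Lam⁻¹ * (B *ᵥ s ⬝ᵥ B *ᵥ s) := by
    rw [← mul_assoc, ← sq, show Lam⁻¹ * (B *ᵥ s ⬝ᵥ B *ᵥ s)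
      = Lam⁻¹ ^ 2 * (Lam * (B *ᵥ s ⬝ᵥ B *ᵥ s)) by field_simp]
    exact mul_le_mul_of_nonneg_left (hBLam _) (sq_nonneg _)
  rw [← inv_mul_le_iff₀ hLam]
  linarith

end LoewnerOrder

end Matrix

noncomputable def bfgsLowerBound (lam Lam α : ℝ) : ℝ := α * lam / (4 * (α + 2 * Lam))

lemma mapsTo_bfgsLowerBound {lam Lam α : ℝ} (hlam : 0 < lam) (hll : lam ≤ Lam) :
    Set.MapsTo (bfgsLowerBound lam Lam) (Set.Ioc 0 α) (Set.Ioc 0 α) := by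
  intro β ⟨hβ, hβα⟩
  have hLam : 0 < Lam := hlam.trans_le hll
  refine ⟨by unfold bfgsLowerBound; positivity, le_trans ?_ hβα⟩
  rw [bfgsLowerBound, div_le_iff₀ (by positivity)]
  nlinarith

/- With `x = u + c • s`, the curvature term satisfies
`(y ⬝ᵥ x)² / (y ⬝ᵥ s) ≥ c² (y ⬝ᵥ s) / 2 - Lam |u|²`, which controls the component along `s`. -/
lemma bfgsLowerBound_mul_le {n : Type*} [Fintype n] {α lam Lam : ℝ} {y s : n → ℝ}
    (hα : 0 < α) (hlam : 0 < lam) (hll : lam ≤ Lam) (ha : 0 < y ⬝ᵥ s)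
    (hys : lam * (s ⬝ᵥ s) ≤ y ⬝ᵥ s) (hyy : y ⬝ᵥ y ≤ Lam * (y ⬝ᵥ s)) (u : n → ℝ) (c : ℝ) :
    bfgsLowerBound lam Lam α * ((u + c • s) ⬝ᵥ (u + c • s))
      ≤ α * (u ⬝ᵥ u) + (y ⬝ᵥ (u + c • s)) ^ 2 / (y ⬝ᵥ s) := by
  set a := y ⬝ᵥ s
  set p := u ⬝ᵥ u
  set q := c ^ 2 * (s ⬝ᵥ s)
  set R := (y ⬝ᵥ (u + c • s)) ^ 2 / a
  have hLam : 0 < Lam := hlam.trans_le hll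
  have hp : 0 ≤ p := dotProduct_self_nonneg u
  have hyx : y ⬝ᵥ (u + c • s) = y ⬝ᵥ u + c * a := by
    rw [dotProduct_add, dotProduct_smul, smul_eq_mul]
  have hyu : (y ⬝ᵥ u) ^ 2 ≤ Lam * a * p :=
    (sq_dotProduct_le y u).trans (mul_le_mul_of_nonneg_right hyy hp)
  have hR : c ^ 2 * a / 2 - Lam * p ≤ R := by
    rw [le_div_iff₀ ha, hyx]
    nlinarith [sq_nonneg (y ⬝ᵥ u + c * a + y ⬝ᵥ u)]
  have hR₀ : 0 ≤ R := by positivity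
  have hq : lam * q ≤ c ^ 2 * a := by
    simpa only [q, mul_left_comm] using mul_le_mul_of_nonneg_left hys (sq_nonneg c)
  have hxx : (u + c • s) ⬝ᵥ (u + c • s) ≤ 2 * p + 2 * q := by
    refine (add_dotProduct_add_le u (c • s)).trans_eq ?_
    simp only [p, q, smul_dotProduct, dotProduct_smul, smul_eq_mul]
    ring
  rw [bfgsLowerBound, div_mul_eq_mul_div, div_le_iff₀ (by positivity)]
  nlinarith [mul_le_mul_of_nonneg_left hxx (by positivity : 0 ≤ α * lam),
    mul_le_mul_of_nonneg_left hq hα.le, mul_le_mul_of_nonneg_left hR hα.le,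
    mul_nonneg hLam.le hR₀, mul_nonneg (mul_nonneg hα.le hp) hα.le,
    mul_le_mul_of_nonneg_left hll (mul_nonneg hα.le hp)]

section BFGS

variable {d : ℕ}

lemma bfgsUpdate_isSymm {H : Matrix (Fin d) (Fin d) ℝ} (hH : H.IsSymm) (s y : Fin d → ℝ) :
    (bfgsUpdate H s y).IsSymm := by
  simp only [IsSymm, bfgsUpdate, hH.vecMul_eq_mulVec, transpose_add, transpose_sub,
    transpose_smul, transpose_vecMulVec, hH.eq]

lemma Matrix.IsSymm.dotProduct_bfgsUpdate_mulVec {H : Matrix (Fin d) (Fin d) ℝ} (hH : H.IsSymm)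
    (s y x : Fin d → ℝ) : x ⬝ᵥ bfgsUpdate H s y *ᵥ x
      = x ⬝ᵥ H *ᵥ x - (x ⬝ᵥ H *ᵥ s) ^ 2 / (s ⬝ᵥ H *ᵥ s) + (y ⬝ᵥ x) ^ 2 / (y ⬝ᵥ s) := by
  simp only [bfgsUpdate, hH.vecMul_eq_mulVec, add_mulVec, sub_mulVec, smul_mulVec,
    vecMulVec_mulVec, dotProduct_add, dotProduct_sub, dotProduct_smul, op_smul_eq_mul, smul_eq_mul,
    dotProduct_comm (H *ᵥ s) x, dotProduct_comm x y]
  ring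

lemma smul_one_le_bfgsUpdate {H : Matrix (Fin d) (Fin d) ℝ} {s y : Fin d → ℝ} {α lam Lam : ℝ}
    (hα : 0 < α) (hlam : 0 < lam) (hll : lam ≤ Lam) (hH : α • 1 ≤ H) (hs : s ≠ 0)
    (hys : lam * (s ⬝ᵥ s) ≤ y ⬝ᵥ s) (hyy : y ⬝ᵥ y ≤ Lam * (y ⬝ᵥ s)) :
    bfgsLowerBound lam Lam α • 1 ≤ bfgsUpdate H s y := by
  obtain ⟨hHs, hαH⟩ := smul_one_le_iff.1 hH
  have hss : 0 < s ⬝ᵥ s := by simpa using dotProduct_star_self_pos_iff.2 hs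
  have hsHs : 0 < s ⬝ᵥ H *ᵥ s := (mul_pos hα hss).trans_le (hαH s)
  refine smul_one_le_iff.2 ⟨bfgsUpdate_isSymm hHs s y, fun x => ?_⟩
  -- `x - c • s` is the `H`-orthogonal projection of `x` onto the complement of `s`
  set c := (x ⬝ᵥ H *ᵥ s) / (s ⬝ᵥ H *ᵥ s)
  have hproj : (x - c • s) ⬝ᵥ H *ᵥ (x - c • s)
      = x ⬝ᵥ H *ᵥ x - (x ⬝ᵥ H *ᵥ s) ^ 2 / (s ⬝ᵥ H *ᵥ s) := by
    rw [hHs.dotProduct_mulVec_sub_smul]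
    simp only [c]
    field_simp
    ring
  have key := bfgsLowerBound_mul_le hα hlam hll ((mul_pos hlam hss).trans_le hys) hys hyy
    (x - c • s) c
  rw [sub_add_cancel] at key
  rw [hHs.dotProduct_bfgsUpdate_mulVec]
  linarith [hαH (x - c • s)]

lemma bfgsUpdate_le_smul_one {H : Matrix (Fin d) (Fin d) ℝ} {s y : Fin d → ℝ} {M Lam : ℝ}
    (hH₀ : H.PosSemidef) (hH : H ≤ M • 1) (ha : 0 < y ⬝ᵥ s) (hyy : y ⬝ᵥ y ≤ Lam * (y ⬝ᵥ s)) :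
    bfgsUpdate H s y ≤ (M + Lam) • 1 := by
  obtain ⟨hHs, hHM⟩ := le_smul_one_iff.1 hH
  refine le_smul_one_iff.2 ⟨bfgsUpdate_isSymm hHs s y, fun x => ?_⟩
  have hsHs : 0 ≤ s ⬝ᵥ H *ᵥ s := by simpa using hH₀.dotProduct_mulVec_nonneg s
  have hyx : (y ⬝ᵥ x) ^ 2 / (y ⬝ᵥ s) ≤ Lam * (x ⬝ᵥ x) := by
    rw [div_le_iff₀ ha]
    nlinarith [sq_dotProduct_le y x, dotProduct_self_nonneg x]
  rw [hHs.dotProduct_bfgsUpdate_mulVec]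
  have : 0 ≤ (x ⬝ᵥ H *ᵥ s) ^ 2 / (s ⬝ᵥ H *ᵥ s) := by positivity
  linarith [hHM x]

theorem bfgs_sequence_bounds {m : ℕ} {𝓗 B : ℕ → Matrix (Fin d) (Fin d) ℝ} {s : ℕ → Fin d → ℝ}
    {α M lam Lam : ℝ} (hα : 0 < α) (hlam : 0 < lam) (hll : lam ≤ Lam)
    (hlo : α • 1 ≤ 𝓗 0) (hhi : 𝓗 0 ≤ M • 1) (hs : ∀ j < m, s (j + 1) ≠ 0)
    (hBlo : ∀ j < m, lam • 1 ≤ B (j + 1)) (hBhi : ∀ j < m, B (j + 1) ≤ Lam • 1)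
    (hupd : ∀ j < m, 𝓗 (j + 1) = bfgsUpdate (𝓗 j) (s (j + 1)) (B (j + 1) *ᵥ s (j + 1))) :
    ∀ j ≤ m, (bfgsLowerBound lam Lam)^[j] α • 1 ≤ 𝓗 j ∧ 𝓗 j ≤ (M + j * Lam) • 1 := by
  intro j
  induction j with
  | zero => simpa using ⟨hlo, hhi⟩
  | succ j ih =>
    intro hj
    obtain ⟨hjlo, hjhi⟩ := ih (by omega)
    have hαj := ((mapsTo_bfgsLowerBound hlam hll).iterate j ⟨hα, le_rfl⟩).1
    obtain ⟨hBs, hlamB⟩ := smul_one_le_iff.1 (hBlo j hj)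
    have hys := (hlamB (s (j + 1))).trans_eq (dotProduct_comm _ _)
    have hyy := (posDef_of_smul_one_le hlam (hBlo j hj)).posSemidef.mulVec_dotProduct_mulVec_le
      (hlam.trans_le hll) (hBhi j hj) (s (j + 1))
    rw [dotProduct_comm (s (j + 1))] at hyy
    have ha : 0 < B (j + 1) *ᵥ s (j + 1) ⬝ᵥ s (j + 1) :=
      (mul_pos hlam (by simpa using dotProduct_star_self_pos_iff.2 (hs j hj))).trans_le hys
    rw [hupd j hj, Function.iterate_succ_apply', Nat.cast_succ, add_one_mul, ← add_assoc]
    exact ⟨smul_one_le_bfgsUpdate hαj hlam hll hjlo (hs j hj) hys hyy,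
      bfgsUpdate_le_smul_one (posDef_of_smul_one_le hαj hjlo).posSemidef hjhi ha hyy⟩

end BFGS

theorem stmt10_general (d m : ℕ)
    (σ Sig lamHat LamHat : ℝ) (hσ : 0 < σ) (hsS : σ ≤ Sig)
    (hlam : 0 < lamHat) (hll : lamHat ≤ LamHat) :
    ∃ μ₁ μ₂ : ℝ, 0 < μ₁ ∧ μ₁ ≤ μ₂ ∧
      ∀ (𝓗 : ℕ → Matrix (Fin d) (Fin d) ℝ) (s y : ℕ → Fin d → ℝ)
        (B : ℕ → Matrix (Fin d) (Fin d) ℝ),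
        (𝓗 0).IsSymm →
        (𝓗 0 - Sig⁻¹ • (1 : Matrix (Fin d) (Fin d) ℝ)).PosSemidef →
        (σ⁻¹ • (1 : Matrix (Fin d) (Fin d) ℝ) - 𝓗 0).PosSemidef →
        (∀ j, 1 ≤ j → j ≤ m → s j ≠ 0) →
        (∀ j, 1 ≤ j → j ≤ m → (B j).IsSymm) →
        (∀ j, 1 ≤ j → j ≤ m →
          (B j - lamHat • (1 : Matrix (Fin d) (Fin d) ℝ)).PosSemidef) →
        (∀ j, 1 ≤ j → j ≤ m →
          (LamHat • (1 : Matrix (Fin d) (Fin d) ℝ) - B j).PosSemidef) →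
        (∀ j, 1 ≤ j → j ≤ m → y j = (B j).mulVec (s j)) →
        (∀ j, j < m → 𝓗 (j + 1) = bfgsUpdate (𝓗 j) (s (j + 1)) (y (j + 1))) →
        (∀ j, j ≤ m → (𝓗 j).PosDef) ∧
          ((𝓗 m)⁻¹ - μ₁ • (1 : Matrix (Fin d) (Fin d) ℝ)).PosSemidef ∧
          (μ₂ • (1 : Matrix (Fin d) (Fin d) ℝ) - (𝓗 m)⁻¹).PosSemidef := by
  have hSig : 0 < Sig⁻¹ := inv_pos.2 (hσ.trans_le hsS)
  have hLam : 0 < LamHat := hlam.trans_le hll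
  have hα (j : ℕ) := (mapsTo_bfgsLowerBound hlam hll).iterate j ⟨hSig, le_rfl⟩
  set α := (bfgsLowerBound lamHat LamHat)^[m] Sig⁻¹
  set M := σ⁻¹ + m * LamHat
  have hM : 0 < M := by positivity
  have hαM : α ≤ M := (hα m).2.trans <| (inv_anti₀ hσ hsS).trans <|
    le_add_of_nonneg_right (by positivity)
  refine ⟨M⁻¹, α⁻¹, inv_pos.2 hM, inv_anti₀ (hα m).1 hαM, ?_⟩
  intro 𝓗 s y B _ h₀lo h₀hi hs _ hBlo hBhi hy hupd
  have bounds := bfgs_sequence_bounds (m := m) hSig hlam hll (le_iff.2 h₀lo) (le_iff.2 h₀hi)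
    (fun j hj => hs (j + 1) (by omega) hj) (fun j hj => le_iff.2 (hBlo (j + 1) (by omega) hj))
    (fun j hj => le_iff.2 (hBhi (j + 1) (by omega) hj))
    (fun j hj => by rw [hupd j hj, hy (j + 1) (by omega) hj])
  obtain ⟨hlo, hhi⟩ := bounds m le_rfl
  exact ⟨fun j hj => posDef_of_smul_one_le (hα j).1 (bounds j hj).1,
    le_iff.1 (inv_smul_one_le_inv (posDef_of_smul_one_le (hα m).1 hlo) hM hhi),
    le_iff.1 (inv_le_inv_smul_one (hα m).1 hlo)⟩

theorem stmt10 (d m : ℕ) (hd : 1 ≤ d) (hm : 1 ≤ m)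
    (σ Sig lamHat LamHat : ℝ) (hσ : 0 < σ) (hsS : σ ≤ Sig)
    (hlam : 0 < lamHat) (hll : lamHat ≤ LamHat) :
    ∃ μ₁ μ₂ : ℝ, 0 < μ₁ ∧ μ₁ ≤ μ₂ ∧
      ∀ (𝓗 : ℕ → Matrix (Fin d) (Fin d) ℝ) (s y : ℕ → Fin d → ℝ)
        (B : ℕ → Matrix (Fin d) (Fin d) ℝ),
        (𝓗 0).IsSymm →
        (𝓗 0 - Sig⁻¹ • (1 : Matrix (Fin d) (Fin d) ℝ)).PosSemidef →
        (σ⁻¹ • (1 : Matrix (Fin d) (Fin d) ℝ) - 𝓗 0).PosSemidef →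
        (∀ j, 1 ≤ j → j ≤ m → s j ≠ 0) →
        (∀ j, 1 ≤ j → j ≤ m → (B j).IsSymm) →
        (∀ j, 1 ≤ j → j ≤ m →
          (B j - lamHat • (1 : Matrix (Fin d) (Fin d) ℝ)).PosSemidef) →
        (∀ j, 1 ≤ j → j ≤ m →
          (LamHat • (1 : Matrix (Fin d) (Fin d) ℝ) - B j).PosSemidef) →
        (∀ j, 1 ≤ j → j ≤ m → y j = (B j).mulVec (s j)) →
        (∀ j, j < m → 𝓗 (j + 1) = bfgsUpdate (𝓗 j) (s (j + 1)) (y (j + 1))) →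
        (∀ j, j ≤ m → (𝓗 j).PosDef) ∧
          ((𝓗 m)⁻¹ - μ₁ • (1 : Matrix (Fin d) (Fin d) ℝ)).PosSemidef ∧
          (μ₂ • (1 : Matrix (Fin d) (Fin d) ℝ) - (𝓗 m)⁻¹).PosSemidef :=
  stmt10_general d m σ Sig lamHat LamHat hσ hsS hlam hll
end

section
/- Suppose each f_i : ℝ^d → ℝ (i = 1,…,n, n ≥ 2) is differentiable, F(w) = (1/n) ∑_{i=1}^n f_i(w) is Λ-smooth and bounded below by F̂, and there exist γ ≥ 0 and η > 0 such that for all w ∈ ℝ^d the uniform average over all size-b subsets S of {1,…,n} satisfies E_S[‖∇F^S(w)‖²] ≤ γ² + η ‖∇F(w)‖². Let S_0, S_1, S_2, … be independent uniformly distributed size-b subsets of {1,…,n}; for each k let H_k be a real symmetric d×d matrix that is a function of S_0,…,S_{k−1} only and satisfies μ₁ I ⪯ H_k ⪯ μ₂ I (0 < μ₁ ≤ μ₂). Let α ∈ (0, μ₁ / (μ₂² η Λ)) and define w_{k+1} = w_k − α H_k ∇F^{S_k}(w_k) from a deterministic w_0. Then for all L ≥ 1: (1/L) ∑_{k=0}^{L−1}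 E[‖∇F(w_k)‖²] ≤ α μ₂² γ² Λ / μ₁ + 2 (F(w_0) − F̂) / (α μ₁ L). -/
/-!
By the descent lemma for the `Λ`-smooth `F`, one preconditioned step `w ↦ w - α H g` with a
batch gradient `g` satisfies, on average over the batch,
`𝔼 F(w⁺) ≤ F w - θ ‖∇F w‖² + K` with `θ = α μ₁ - Λ α² μ₂² η / 2 ≥ α μ₁ / 2` and
`K = Λ α² μ₂² γ² / 2`: the batch gradient is unbiased, so the linear term averages to
`⟪∇F w, H ∇F w⟫ ≥ μ₁ ‖∇F w‖²`, while `‖H g‖² ≤ μ₂² ‖g‖²` brings in the second-moment bound.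
Since `H_k` only depends on the first `k` batches, the expectation over `S_0, …, S_k` can be
taken over `S_k` first; telescoping the resulting recursion against `F ≥ F̂` gives the bound.
-/

open scoped Matrix RealInnerProductSpace BigOperators
open Finset

namespace LinearMap.IsSymmetric

variable {E : Type*} [NormedAddCommGroup E] [InnerProductSpace ℝ E] {T : E →ₗ[ℝ] E}

theorem norm_apply_sq_le (hT : T.IsSymmetric) (hpos : ∀ x, 0 ≤ ⟪T x, x⟫) {μ : ℝ} (hμ : 0 < μ)
    (hle : ∀ x, ⟪T x, x⟫ ≤ μ * ‖x‖ ^ 2) (x : E) : ‖T x‖ ^ 2 ≤ μ ^ 2 * ‖x‖ ^ 2 := by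
  set y := T x
  have hyx : ⟪T y, x⟫ = ‖y‖ ^ 2 := by rw [hT, real_inner_self_eq_norm_sq]
  have hxy : ⟪T x, y⟫ = ‖y‖ ^ 2 := real_inner_self_eq_norm_sq y
  -- `0 ≤ ⟪T (μ x - y), μ x - y⟫` expands to `‖y‖² ≤ μ ⟪T x, x⟫` once `⟪T y, y⟫ ≤ μ ‖y‖²`
  have hexp : ⟪T (μ • x - y), μ • x - y⟫ = μ ^ 2 * ⟪T x, x⟫ - 2 * μ * ‖y‖ ^ 2 + ⟪T y, y⟫ := by
    simp only [map_sub, map_smul, inner_sub_left, inner_sub_right, real_inner_smul_left,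
      real_inner_smul_right, hxy, hyx]
    ring
  have : μ * ‖y‖ ^ 2 ≤ μ * (μ ^ 2 * ‖x‖ ^ 2) := by nlinarith [hpos (μ • x - y), hle x, hle y]
  exact le_of_mul_le_mul_left this hμ

end LinearMap.IsSymmetric

namespace Matrix

variable {m : Type*} [Fintype m] [DecidableEq m] {A : Matrix m m ℝ} {μ : ℝ}

theorem PosSemidef.inner_toEuclideanLin_nonneg (hA : A.PosSemidef) (x : EuclideanSpace ℝ m) :
    0 ≤ ⟪A.toEuclideanLin x, x⟫ :=
  (isPositive_toEuclideanLin_iff.mpr hA).inner_nonneg_left x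

theorem inner_toEuclideanLin_smul_one (x : EuclideanSpace ℝ m) :
    ⟪(μ • (1 : Matrix m m ℝ)).toEuclideanLin x, x⟫ = μ * ‖x‖ ^ 2 := by
  simp [real_inner_smul_left]

theorem le_inner_toEuclideanLin_of_posSemidef_sub (h : (A - μ • 1).PosSemidef)
    (x : EuclideanSpace ℝ m) : μ * ‖x‖ ^ 2 ≤ ⟪A.toEuclideanLin x, x⟫ := by
  have := h.inner_toEuclideanLin_nonneg x
  rw [map_sub, LinearMap.sub_apply, inner_sub_left, inner_toEuclideanLin_smul_one] at this
  linarith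

theorem inner_toEuclideanLin_le_of_posSemidef_sub (h : (μ • 1 - A).PosSemidef)
    (x : EuclideanSpace ℝ m) : ⟪A.toEuclideanLin x, x⟫ ≤ μ * ‖x‖ ^ 2 := by
  have := h.inner_toEuclideanLin_nonneg x
  rw [map_sub, LinearMap.sub_apply, inner_sub_left, inner_toEuclideanLin_smul_one] at this
  linarith

theorem norm_toEuclideanLin_sq_le (hA : A.IsSymm) {μ₁ μ₂ : ℝ} (hμ₁ : 0 < μ₁) (hμ : μ₁ ≤ μ₂)
    (h₁ : (A - μ₁ • 1).PosSemidef) (h₂ : (μ₂ • 1 - A).PosSemidef) (x : EuclideanSpace ℝ m) :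
    ‖A.toEuclideanLin x‖ ^ 2 ≤ μ₂ ^ 2 * ‖x‖ ^ 2 :=
  (isSymmetric_toEuclideanLin_iff.mpr (isHermitian_iff_isSymm.mpr hA)).norm_apply_sq_le
    (fun y => (mul_nonneg hμ₁.le (sq_nonneg _)).trans
      (le_inner_toEuclideanLin_of_posSemidef_sub h₁ y))
    (hμ₁.trans_le hμ) (inner_toEuclideanLin_le_of_posSemidef_sub h₂) x

end Matrix

theorem Finset.sum_powersetCard_sum {α M : Type*} [DecidableEq α] [AddCommMonoid M]
    (s : Finset α) {k : ℕ} (hk : 1 ≤ k) (v : α → M) :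
    ∑ S ∈ s.powersetCard k, ∑ i ∈ S, v i = (#s - 1).choose (k - 1) • ∑ i ∈ s, v i := by
  rw [sum_comm' (t' := s) (s' := fun i => {S ∈ s.powersetCard k | {i} ⊆ S})]
  · rw [smul_sum]
    refine sum_congr rfl fun i hi => ?_
    rw [sum_const, card_filter_powersetCard_subset _ _ _ (singleton_subset_iff.mpr hi)
      (by simpa using hk), card_singleton]
  · intro S i
    simp only [mem_powersetCard, mem_filter, singleton_subset_iff]
    constructor
    · rintro ⟨hS, hi⟩
      exact ⟨⟨hS, hi⟩, hS.1 hi⟩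
    · rintro ⟨hS, -⟩
      exact hS

theorem Finset.sum_powersetCard_smul_sum {α E : Type*} [DecidableEq α] [AddCommGroup E]
    [Module ℝ E] (s : Finset α) {k : ℕ} (hk : 1 ≤ k) (v : α → E) :
    ∑ S ∈ s.powersetCard k, (k : ℝ)⁻¹ • ∑ i ∈ S, v i
      = (#(s.powersetCard k) : ℝ) • (#s : ℝ)⁻¹ • ∑ i ∈ s, v i := by
  rcases s.eq_empty_or_nonempty with rfl | hs
  · simp [powersetCard_eq_empty.mpr (show #(∅ : Finset α) < k by simpa)]
  have hcount : (#s : ℝ) * (#s - 1).choose (k - 1) = (#s).choose k * k := by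
    obtain ⟨m, hm⟩ : ∃ m, #s = m + 1 := ⟨#s - 1, by have := hs.card_pos; omega⟩
    obtain ⟨j, rfl⟩ : ∃ j, k = j + 1 := ⟨k - 1, by omega⟩
    rw [hm]
    exact_mod_cast Nat.add_one_mul_choose_eq m j
  have hk0 : (k : ℝ) ≠ 0 := by positivity
  have hs0 : (#s : ℝ) ≠ 0 := by positivity
  rw [← smul_sum, sum_powersetCard_sum s hk, ← Nat.cast_smul_eq_nsmul ℝ, smul_smul, smul_smul,
    card_powersetCard]
  congr 1
  field_simp
  linarith

theorem Finset.expect_piFinset_succ {α M : Type*} [AddCommMonoid M] [Module ℚ≥0 M]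
    (P : Finset α) (k : ℕ) (X : (Fin (k + 1) → α) → M) :
    𝔼 ω ∈ Fintype.piFinset (fun _ : Fin (k + 1) => P), X ω
      = 𝔼 ω ∈ Fintype.piFinset (fun _ : Fin k => P), 𝔼 S ∈ P, X (Fin.snoc ω S) := by
  rw [expect_comm, ← expect_product' P _ (fun S ω => X (Fin.snoc ω S))]
  refine expect_equiv (Fin.snocEquiv fun _ => α).symm (fun ω => ?_) (fun ω _ => ?_)
  · simp [Fin.mem_piFinset_iff_last_init (s := fun _ : Fin (k + 1) => P), Fin.init]
  · simp

theorem sum_range_le_of_le_sub_add {a g : ℕ → ℝ} {θ K lo : ℝ}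
    (h : ∀ k, a (k + 1) ≤ a k - θ * g k + K) (L : ℕ) (hlo : lo ≤ a L) :
    θ * ∑ k ∈ range L, g k ≤ a 0 - lo + L * K := by
  have hsum : ∑ k ∈ range L, θ * g k ≤ ∑ k ∈ range L, (a k - a (k + 1) + K) :=
    sum_le_sum fun k _ => by linarith [h k]
  rw [← mul_sum, sum_add_distrib, sum_range_sub', sum_const, card_range, nsmul_eq_mul] at hsum
  linarith

theorem pos_and_half_mul_le_of_lt_div {α μ₁ μ₂ η Λ : ℝ} (hμ₁ : 0 < μ₁) (hη : 0 < η)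
    (hα0 : 0 < α) (hα1 : α < μ₁ / (μ₂ ^ 2 * η * Λ)) :
    0 < Λ ∧ α * μ₁ / 2 ≤ α * μ₁ - Λ * α ^ 2 * μ₂ ^ 2 * η / 2 := by
  have hden : 0 < μ₂ ^ 2 * η * Λ := by
    by_contra! h
    linarith [div_nonpos_of_nonneg_of_nonpos hμ₁.le h]
  refine ⟨?_, ?_⟩
  · by_contra! h
    linarith [mul_nonpos_of_nonneg_of_nonpos (by positivity : 0 ≤ μ₂ ^ 2 * η) h]
  · linarith [mul_le_mul_of_nonneg_left ((lt_div_iff₀ hden).mp hα1).le hα0.le]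

section InnerProductSpace

variable {E : Type*} [NormedAddCommGroup E] [InnerProductSpace ℝ E] [CompleteSpace E]

theorem gradient_const_mul_sum {ι : Type*} {s : Finset ι} {f : ι → E → ℝ}
    (hf : ∀ i ∈ s, Differentiable ℝ (f i)) (c : ℝ) (w : E) :
    gradient (fun w => c * ∑ i ∈ s, f i w) w = c • ∑ i ∈ s, gradient (f i) w := by
  refine HasGradientAt.gradient ?_
  have := (HasFDerivAt.fun_sum fun i hi => (hf i hi w).hasGradientAt.hasFDerivAt).const_mul c
  rw [hasGradientAt_iff_hasFDerivAt, map_smul, map_sum]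
  simpa using this

theorem Differentiable.le_add_inner_gradient_add_sq {F : E → ℝ} (hF : Differentiable ℝ F)
    {Λ : ℝ} (hsmooth : ∀ w w', ‖gradient F w' - gradient F w‖ ≤ Λ * ‖w' - w‖) (x y : E) :
    F y ≤ F x + ⟪gradient F x, y - x⟫ + Λ / 2 * ‖y - x‖ ^ 2 := by
  set v := y - x
  -- the gap between `F` and its quadratic upper model along the segment is antitone
  let φ : ℝ → ℝ := fun t => F (x + t • v) - t * ⟪gradient F x, v⟫ - Λ / 2 * t ^ 2 * ‖v‖ ^ 2
  have hderiv : ∀ t, HasDerivAt φ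
      (⟪gradient F (x + t • v) - gradient F x, v⟫ - Λ * t * ‖v‖ ^ 2) t := by
    intro t
    have hline : HasDerivAt (fun t : ℝ => x + t • v) v t := by
      simpa using ((hasDerivAt_id t).smul_const v).const_add x
    have hF' := (hF (x + t • v)).hasGradientAt.hasFDerivAt.comp_hasDerivAt t hline
    refine ((hF'.sub ((hasDerivAt_id t).mul_const ⟪gradient F x, v⟫)).sub
      (((hasDerivAt_pow 2 t).const_mul (Λ / 2)).mul_const (‖v‖ ^ 2))).congr_deriv ?_
    rw [InnerProductSpace.toDual_apply_apply, inner_sub_left]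
    push_cast
    ring
  have hmono : AntitoneOn φ (Set.Ici 0) := by
    refine antitoneOn_of_hasDerivWithinAt_nonpos (convex_Ici 0)
      (fun t _ => (hderiv t).continuousAt.continuousWithinAt)
      (fun t _ => (hderiv t).hasDerivWithinAt) fun t ht => ?_
    rw [interior_Ici, Set.mem_Ioi] at ht
    have hlip : ‖gradient F (x + t • v) - gradient F x‖ ≤ Λ * (t * ‖v‖) := by
      simpa [norm_smul, abs_of_pos ht] using hsmooth x (x + t • v)
    have := (real_inner_le_norm _ v).trans (mul_le_mul_of_nonneg_right hlip (norm_nonneg v))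
    linarith
  have := hmono Set.self_mem_Ici (zero_le_one' ℝ) zero_le_one
  simp only [φ, v, one_smul, zero_smul, add_zero, add_sub_cancel, one_mul, zero_mul, one_pow,
    sub_zero] at this
  linarith

theorem expect_apply_preconditioned_step_le {ι : Type*} {P : Finset ι} (hP : P.Nonempty)
    {F : E → ℝ} (hF : Differentiable ℝ F) {Λ : ℝ} (hΛ : 0 ≤ Λ)
    (hsmooth : ∀ w w', ‖gradient F w' - gradient F w‖ ≤ Λ * ‖w' - w‖)
    {T : E →ₗ[ℝ] E} {μ₁ μ₂ : ℝ} (hT₁ : ∀ x, μ₁ * ‖x‖ ^ 2 ≤ ⟪T x, x⟫)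
    (hT₂ : ∀ x, ‖T x‖ ^ 2 ≤ μ₂ ^ 2 * ‖x‖ ^ 2)
    {u : E} {g : ι → E} (hunbiased : ∑ S ∈ P, g S = (#P : ℝ) • gradient F u)
    {γ η : ℝ} (hvar : 𝔼 S ∈ P, ‖g S‖ ^ 2 ≤ γ ^ 2 + η * ‖gradient F u‖ ^ 2)
    {α : ℝ} (hα : 0 ≤ α) :
    𝔼 S ∈ P, F (u - α • T (g S))
      ≤ F u - (α * μ₁ - Λ * α ^ 2 * μ₂ ^ 2 * η / 2) * ‖gradient F u‖ ^ 2
        + Λ * α ^ 2 * μ₂ ^ 2 * γ ^ 2 / 2 := by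
  set G := gradient F u
  have hdescent : ∀ S,
      F (u - α • T (g S)) ≤ F u - α * ⟪G, T (g S)⟫ + Λ / 2 * α ^ 2 * ‖T (g S)‖ ^ 2 := by
    intro S
    have := hF.le_add_inner_gradient_add_sq hsmooth u (u - α • T (g S))
    rw [sub_sub_cancel_left, inner_neg_right, real_inner_smul_right, norm_neg, norm_smul,
      Real.norm_of_nonneg hα] at this
    linarith
  have hinner : 𝔼 S ∈ P, ⟪G, T (g S)⟫ = ⟪G, T G⟫ := by
    rw [expect_eq_sum_div_card, ← inner_sum, ← map_sum, hunbiased, map_smul, real_inner_smul_right]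
    field_simp [hP.card_pos.ne']
  have hsecond : 𝔼 S ∈ P, ‖T (g S)‖ ^ 2 ≤ μ₂ ^ 2 * (γ ^ 2 + η * ‖G‖ ^ 2) :=
    calc 𝔼 S ∈ P, ‖T (g S)‖ ^ 2 ≤ 𝔼 S ∈ P, μ₂ ^ 2 * ‖g S‖ ^ 2 := expect_le_expect fun S _ => hT₂ _
      _ = μ₂ ^ 2 * 𝔼 S ∈ P, ‖g S‖ ^ 2 := (mul_expect _ _ _).symm
      _ ≤ μ₂ ^ 2 * (γ ^ 2 + η * ‖G‖ ^ 2) := by gcongr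
  calc 𝔼 S ∈ P, F (u - α • T (g S))
      ≤ 𝔼 S ∈ P, (F u - α * ⟪G, T (g S)⟫ + Λ / 2 * α ^ 2 * ‖T (g S)‖ ^ 2) :=
        expect_le_expect fun S _ => hdescent S
    _ = F u - α * ⟪G, T G⟫ + Λ / 2 * α ^ 2 * 𝔼 S ∈ P, ‖T (g S)‖ ^ 2 := by
        rw [expect_add_distrib, expect_sub_distrib, expect_const hP, ← mul_expect, ← mul_expect,
          hinner]
    _ ≤ F u - α * (μ₁ * ‖G‖ ^ 2) + Λ / 2 * α ^ 2 * (μ₂ ^ 2 * (γ ^ 2 + η * ‖G‖ ^ 2)) := by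
        gcongr
        rw [real_inner_comm]
        exact hT₁ G
    _ = _ := by ring

/-- `w k ω` is the iterate after the batches `ω 0, …, ω (k - 1)`, so the average over
`Fintype.piFinset fun _ : Fin k => P` is the expectation over i.i.d. uniform batches from `P`. -/
theorem preconditioned_sgd_avg_expect_norm_gradient_sq_le {ι : Type*} {P : Finset ι}
    (hP : P.Nonempty) {F : E → ℝ} (hF : Differentiable ℝ F) {Λ : ℝ}
    (hsmooth : ∀ w w', ‖gradient F w' - gradient F w‖ ≤ Λ * ‖w' - w‖)
    {Fhat : ℝ} (hbdd : ∀ w, Fhat ≤ F w)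
    {g : E → ι → E} (hunbiased : ∀ u, ∑ S ∈ P, g u S = (#P : ℝ) • gradient F u)
    {γ η : ℝ} (hη : 0 < η)
    (hvar : ∀ u, 𝔼 S ∈ P, ‖g u S‖ ^ 2 ≤ γ ^ 2 + η * ‖gradient F u‖ ^ 2)
    {μ₁ μ₂ : ℝ} (hμ₁ : 0 < μ₁) {T : (k : ℕ) → (Fin k → ι) → E →ₗ[ℝ] E}
    (hT₁ : ∀ k ω x, μ₁ * ‖x‖ ^ 2 ≤ ⟪T k ω x, x⟫)
    (hT₂ : ∀ k ω x, ‖T k ω x‖ ^ 2 ≤ μ₂ ^ 2 * ‖x‖ ^ 2)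
    {α : ℝ} (hα0 : 0 < α) (hα1 : α < μ₁ / (μ₂ ^ 2 * η * Λ))
    {w : (k : ℕ) → (Fin k → ι) → E} {w₀ : E} (hw₀ : ∀ ω, w 0 ω = w₀)
    (hstep : ∀ k ω S, w (k + 1) (Fin.snoc ω S) = w k ω - α • T k ω (g (w k ω) S)) (L : ℕ) :
    (L : ℝ)⁻¹ * ∑ k ∈ range L,
        𝔼 ω ∈ Fintype.piFinset (fun _ : Fin k => P), ‖gradient F (w k ω)‖ ^ 2
      ≤ α * μ₂ ^ 2 * γ ^ 2 * Λ / μ₁ + 2 * (F w₀ - Fhat) / (α * μ₁ * L) := by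
  obtain ⟨hΛ, hθ⟩ := pos_and_half_mul_le_of_lt_div hμ₁ hη hα0 hα1
  set θ := α * μ₁ - Λ * α ^ 2 * μ₂ ^ 2 * η / 2
  set K := Λ * α ^ 2 * μ₂ ^ 2 * γ ^ 2 / 2
  have hhist : ∀ k, (Fintype.piFinset fun _ : Fin k => P).Nonempty :=
    fun k => Fintype.piFinset_nonempty.mpr fun _ => hP
  set a : ℕ → ℝ := fun k => 𝔼 ω ∈ Fintype.piFinset (fun _ : Fin k => P), F (w k ω)
  set G : ℕ → ℝ := fun k =>
    𝔼 ω ∈ Fintype.piFinset (fun _ : Fin k => P), ‖gradient F (w k ω)‖ ^ 2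
  have hdescent : ∀ k, a (k + 1) ≤ a k - θ * G k + K := by
    intro k
    calc a (k + 1)
        = 𝔼 ω ∈ Fintype.piFinset (fun _ : Fin k => P), 𝔼 S ∈ P, F (w (k + 1) (Fin.snoc ω S)) :=
          expect_piFinset_succ P k _
      _ ≤ 𝔼 ω ∈ Fintype.piFinset (fun _ : Fin k => P),
            (F (w k ω) - θ * ‖gradient F (w k ω)‖ ^ 2 + K) :=
          expect_le_expect fun ω _ => by
            simp_rw [hstep]
            exact expect_apply_preconditioned_step_le hP hF hΛ.le hsmooth (hT₁ k ω) (hT₂ k ω)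
              (hunbiased _) (hvar _) hα0.le
      _ = a k - θ * G k + K := by
          rw [expect_add_distrib, expect_sub_distrib, ← mul_expect, expect_const (hhist k)]
  have hlow : Fhat ≤ a L := le_expect (hhist L) fun ω _ => hbdd _
  have ha₀ : a 0 = F w₀ := by simp [a, hw₀]
  have hG : 0 ≤ ∑ k ∈ range L, G k := sum_nonneg fun k _ => expect_nonneg fun ω _ => by positivity
  have htel := sum_range_le_of_le_sub_add hdescent L hlow
  rw [ha₀] at htel
  rcases L.eq_zero_or_pos with rfl | hL
  · simp only [CharP.cast_eq_zero, inv_zero, zero_mul, mul_zero, div_zero, add_zero]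
    positivity
  calc (L : ℝ)⁻¹ * ∑ k ∈ range L, G k = 2 / (α * μ₁ * L) * (α * μ₁ / 2 * ∑ k ∈ range L, G k) := by
        field_simp
    _ ≤ 2 / (α * μ₁ * L) * (F w₀ - Fhat + L * K) := by
        gcongr
        linarith [mul_le_mul_of_nonneg_right hθ hG]
    _ = α * μ₂ ^ 2 * γ ^ 2 * Λ / μ₁ + 2 * (F w₀ - Fhat) / (α * μ₁ * L) := by
        field_simp
        ring

end InnerProductSpace

theorem stmt16_general (d n b : ℕ) (hb1 : 1 ≤ b) (hbn : b ≤ n)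
    (Λ : ℝ)
    (f : Fin n → EuclideanSpace ℝ (Fin d) → ℝ)
    (hdiff : ∀ i, Differentiable ℝ (f i))
    (F : EuclideanSpace ℝ (Fin d) → ℝ) (hF : ∀ w, F w = (n : ℝ)⁻¹ * ∑ i, f i w)
    (hFdiff : Differentiable ℝ F)
    (hsmooth : ∀ w w' : EuclideanSpace ℝ (Fin d),
      ‖gradient F w' - gradient F w‖ ≤ Λ * ‖w' - w‖)
    (Fhat : ℝ) (hbdd : ∀ w, Fhat ≤ F w)
    (γ η : ℝ) (hη : 0 < η)
    (hvar : ∀ w : EuclideanSpace ℝ (Fin d),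
      (∑ S ∈ Finset.powersetCard b (Finset.univ : Finset (Fin n)),
          ‖(b : ℝ)⁻¹ • ∑ i ∈ S, gradient (f i) w‖ ^ 2) / (n.choose b : ℝ)
        ≤ γ ^ 2 + η * ‖gradient F w‖ ^ 2)
    (μ₁ μ₂ : ℝ) (hμ : 0 < μ₁) (hμμ : μ₁ ≤ μ₂)
    (H : (k : ℕ) → (Fin k → Finset (Fin n)) → Matrix (Fin d) (Fin d) ℝ)
    (hH : ∀ k (ω : Fin k → Finset (Fin n)), (H k ω).IsSymm ∧
        (H k ω - μ₁ • (1 : Matrix (Fin d) (Fin d) ℝ)).PosSemidef ∧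
        (μ₂ • (1 : Matrix (Fin d) (Fin d) ℝ) - H k ω).PosSemidef)
    (α : ℝ) (hα0 : 0 < α) (hα1 : α < μ₁ / (μ₂ ^ 2 * η * Λ))
    (w0 : EuclideanSpace ℝ (Fin d))
    (w : (k : ℕ) → (Fin k → Finset (Fin n)) → EuclideanSpace ℝ (Fin d))
    (hw0 : ∀ ω, w 0 ω = w0)
    (hrec : ∀ k (ω : Fin (k + 1) → Finset (Fin n)),
      w (k + 1) ω = w k (fun i => ω i.castSucc)
        - α • Matrix.toEuclideanLin (H k (fun i => ω i.castSucc))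
            ((b : ℝ)⁻¹ • ∑ i ∈ ω (Fin.last k),
              gradient (f i) (w k (fun i => ω i.castSucc))))
    (L : ℕ) :
    (L : ℝ)⁻¹ * ∑ k ∈ Finset.range L,
        (∑ ω ∈ Fintype.piFinset
            (fun _ : Fin k => Finset.powersetCard b (Finset.univ : Finset (Fin n))),
          ‖gradient F (w k ω)‖ ^ 2) / ((n.choose b : ℝ)) ^ k
      ≤ α * μ₂ ^ 2 * γ ^ 2 * Λ / μ₁ + 2 * (F w0 - Fhat) / (α * μ₁ * L) := by
  set P := powersetCard b (univ : Finset (Fin n))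
  have hP : P.Nonempty := powersetCard_nonempty.mpr (by simpa using hbn)
  have hcard : (#P : ℝ) = n.choose b := by simp [P]
  have hgrad : ∀ u, gradient F u = (n : ℝ)⁻¹ • ∑ i, gradient (f i) u := by
    rw [show F = fun w => (n : ℝ)⁻¹ * ∑ i, f i w from funext hF]
    exact gradient_const_mul_sum (fun i _ => hdiff i) _
  have key := preconditioned_sgd_avg_expect_norm_gradient_sq_le hP hFdiff hsmooth hbdd
    (g := fun u S => (b : ℝ)⁻¹ • ∑ i ∈ S, gradient (f i) u)
    (fun u => by rw [sum_powersetCard_smul_sum _ hb1, card_univ, Fintype.card_fin, hgrad])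
    hη (fun u => by rw [expect_eq_sum_div_card, hcard]; exact hvar u) hμ
    (T := fun k ω => (H k ω).toEuclideanLin)
    (fun k ω => Matrix.le_inner_toEuclideanLin_of_posSemidef_sub (hH k ω).2.1)
    (fun k ω => Matrix.norm_toEuclideanLin_sq_le (hH k ω).1 hμ hμμ (hH k ω).2.1 (hH k ω).2.2)
    hα0 hα1 hw0 (fun k ω S => by simp only [hrec, Fin.snoc_castSucc, Fin.snoc_last]) L
  convert key using 3 with k
  rw [expect_eq_sum_div_card, Fintype.card_piFinset_const, Nat.cast_pow, hcard]

theorem stmt16 (d n b : ℕ) (hn : 2 ≤ n) (hb1 : 1 ≤ b) (hbn : b ≤ n)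
    (Λ : ℝ)
    (f : Fin n → EuclideanSpace ℝ (Fin d) → ℝ)
    (hdiff : ∀ i, Differentiable ℝ (f i))
    (F : EuclideanSpace ℝ (Fin d) → ℝ) (hF : ∀ w, F w = (n : ℝ)⁻¹ * ∑ i, f i w)
    (hFdiff : Differentiable ℝ F)
    (hsmooth : ∀ w w' : EuclideanSpace ℝ (Fin d),
      ‖gradient F w' - gradient F w‖ ≤ Λ * ‖w' - w‖)
    (Fhat : ℝ) (hbdd : ∀ w, Fhat ≤ F w)
    (γ η : ℝ) (hγ : 0 ≤ γ) (hη : 0 < η)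
    (hvar : ∀ w : EuclideanSpace ℝ (Fin d),
      (∑ S ∈ Finset.powersetCard b (Finset.univ : Finset (Fin n)),
          ‖(b : ℝ)⁻¹ • ∑ i ∈ S, gradient (f i) w‖ ^ 2) / (n.choose b : ℝ)
        ≤ γ ^ 2 + η * ‖gradient F w‖ ^ 2)
    (μ₁ μ₂ : ℝ) (hμ : 0 < μ₁) (hμμ : μ₁ ≤ μ₂)
    (H : (k : ℕ) → (Fin k → Finset (Fin n)) → Matrix (Fin d) (Fin d) ℝ)
    (hH : ∀ k (ω : Fin k → Finset (Fin n)), (H k ω).IsSymm ∧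
        (H k ω - μ₁ • (1 : Matrix (Fin d) (Fin d) ℝ)).PosSemidef ∧
        (μ₂ • (1 : Matrix (Fin d) (Fin d) ℝ) - H k ω).PosSemidef)
    (α : ℝ) (hα0 : 0 < α) (hα1 : α < μ₁ / (μ₂ ^ 2 * η * Λ))
    (w0 : EuclideanSpace ℝ (Fin d))
    (w : (k : ℕ) → (Fin k → Finset (Fin n)) → EuclideanSpace ℝ (Fin d))
    (hw0 : ∀ ω, w 0 ω = w0)
    (hrec : ∀ k (ω : Fin (k + 1) → Finset (Fin n)),
      w (k + 1) ω = w k (fun i => ω i.castSucc)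
        - α • Matrix.toEuclideanLin (H k (fun i => ω i.castSucc))
            ((b : ℝ)⁻¹ • ∑ i ∈ ω (Fin.last k),
              gradient (f i) (w k (fun i => ω i.castSucc))))
    (L : ℕ) (hL : 1 ≤ L) :
    (L : ℝ)⁻¹ * ∑ k ∈ Finset.range L,
        (∑ ω ∈ Fintype.piFinset
            (fun _ : Fin k => Finset.powersetCard b (Finset.univ : Finset (Fin n))),
          ‖gradient F (w k ω)‖ ^ 2) / ((n.choose b : ℝ)) ^ k
      ≤ α * μ₂ ^ 2 * γ ^ 2 * Λ / μ₁ + 2 * (F w0 - Fhat) / (α * μ₁ * L) :=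
  stmt16_general d n b hb1 hbn Λ f hdiff F hF hFdiff hsmooth Fhat hbdd γ η hη hvar μ₁ μ₂ hμ hμμ H hH
    α hα0 hα1 w0 w hw0 hrec L
end

section
/- Let (a_k)_{k≥0} be a sequence of nonnegative reals, and let α > 0, E > 0, A > 0, B ≥ 0, C ≥ 0 be constants satisfying 1 − A/E + B/E² ≥ 0 and A − 1 − B/E > 0. Suppose that for all k ≥ 0, a_{k+1} ≤ (1 − A/(k+E) + B/(k+E)²) a_k + C/(k+E)². Then for all k ≥ 0, a_k ≤ G/(k+E), where G = max{ C/(A − 1 − B/E), E a_0 }. -/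
open scoped Matrix RealInnerProductSpace
open Finset

theorem stmt18 (a : ℕ → ℝ) (ha : ∀ k, 0 ≤ a k)
    (α Eo A B C : ℝ) (hα : 0 < α) (hEo : 0 < Eo) (hA : 0 < A) (hB : 0 ≤ B) (hC : 0 ≤ C)
    (h1 : 0 ≤ 1 - A / Eo + B / Eo ^ 2) (h2 : 0 < A - 1 - B / Eo)
    (hrec : ∀ k : ℕ, a (k + 1)
      ≤ (1 - A / ((k : ℝ) + Eo) + B / ((k : ℝ) + Eo) ^ 2) * a k + C / ((k : ℝ) + Eo) ^ 2) :
    ∀ k : ℕ, a k ≤ max (C / (A - 1 - B / Eo)) (Eo * a 0) / ((k : ℝ) + Eo) := by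
  have hEne : Eo ≠ 0 := ne_of_gt hEo
  obtain ⟨e, he0, heB⟩ : ∃ e, 0 ≤ e ∧ B = e * Eo :=
    ⟨B / Eo, div_nonneg hB hEo.le, (div_mul_cancel₀ B hEne).symm⟩
  subst heB
  rw [mul_div_cancel_right₀ e hEne] at h2
  have h1' : 0 ≤ Eo ^ 2 - A * Eo + e * Eo := by
    have h1'' : 0 ≤ (1 - A / Eo + e * Eo / Eo ^ 2) * Eo ^ 2 :=
      mul_nonneg h1 (by positivity)
    have hexp : (1 - A / Eo + e * Eo / Eo ^ 2) * Eo ^ 2 = Eo ^ 2 - A * Eo + e * Eo := by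
      field_simp
    linarith [hexp ▸ h1'']
  have hAe : A ≤ Eo + e := by nlinarith [h1', hEo]
  simp only [mul_div_cancel_right₀ e hEne]
  set G := max (C / (A - 1 - e)) (Eo * a 0) with hGdef
  clear_value G
  have hG1 : C / (A - 1 - e) ≤ G := hGdef ▸ le_max_left _ _
  have hG2 : Eo * a 0 ≤ G := hGdef ▸ le_max_right _ _
  have hGC : C ≤ G * (A - 1 - e) := by
    rw [div_le_iff₀ h2] at hG1; linarith
  have hG0 : 0 ≤ G := le_trans (div_nonneg hC h2.le) hG1
  intro k
  induction k with
  | zero =>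
    simp only [Nat.cast_zero, zero_add]
    rw [le_div_iff₀ hEo]
    linarith
  | succ k ih =>
    have hx : (0:ℝ) < (k : ℝ) + Eo := by positivity
    have hxE : Eo ≤ (k : ℝ) + Eo := by
      have : (0:ℝ) ≤ (k:ℝ) := Nat.cast_nonneg k
      linarith
    set x := (k : ℝ) + Eo with hxdef
    have hgoal : ((k+1 : ℕ) : ℝ) + Eo = x + 1 := by push_cast; ring
    rw [hgoal]
    have hx1 : (0:ℝ) < x + 1 := by linarith
    have hr : a (k + 1) ≤ (1 - A / x + e * Eo / x ^ 2) * a k + C / x ^ 2 := hrec k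
    by_cases hc : 0 ≤ 1 - A / x + e * Eo / x ^ 2
    · have step1 : a (k + 1) ≤ (1 - A / x + e * Eo / x ^ 2) * (G / x) + C / x ^ 2 := by
        have := mul_le_mul_of_nonneg_left ih hc
        linarith
      have key : (1 - A / x + e * Eo / x ^ 2) * (G / x) + C / x ^ 2 ≤ G / (x + 1) := by
        have hrw : (1 - A / x + e * Eo / x ^ 2) * (G / x) + C / x ^ 2
            = (G * (x ^ 2 - A * x + e * Eo) + C * x) / x ^ 3 := by
          field_simp
        rw [hrw, div_le_div_iff₀ (by positivity) hx1]
        have hint1 : 0 ≤ G * (e * (x - Eo)) * x :=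
          mul_nonneg (mul_nonneg hG0 (mul_nonneg he0 (by linarith))) hx.le
        have hint2 : 0 ≤ G * (e * (x - Eo)) :=
          mul_nonneg hG0 (mul_nonneg he0 (by linarith))
        have hint3 : 0 ≤ G * x := mul_nonneg hG0 hx.le
        have hint4 : C * (x * (x + 1)) ≤ G * (A - 1 - e) * (x * (x + 1)) :=
          mul_le_mul_of_nonneg_right hGC (by positivity)
        linarith [hint1, hint2, hint3, hint4]
      linarith
    · push_neg at hc
      have step1 : a (k + 1) ≤ C / x ^ 2 := by
        have : (1 - A / x + e * Eo / x ^ 2) * a k ≤ 0 :=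
          mul_nonpos_of_nonpos_of_nonneg hc.le (ha k)
        linarith
      have key : C / x ^ 2 ≤ G / (x + 1) := by
        rw [div_le_div_iff₀ (by positivity) hx1]
        have hint4 : C * (x + 1) ≤ G * (A - 1 - e) * (x + 1) :=
          mul_le_mul_of_nonneg_right hGC hx1.le
        have hint5 : 0 ≤ G * (x - (A - e)) * (x + 1) := by
          have : 0 ≤ x - (A - e) := by linarith
          exact mul_nonneg (mul_nonneg hG0 this) hx1.le
        linarith [hint4, hint5, hG0]
      linarith
end
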